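/- Assume the squaring map n ↦ n² is a bijection of N onto itself, and write m^{1/2} for the unique square root of m. Then every 1-cocycle u ∈ Z¹(PSL(2,ℤ), N) is cohomologous to a cocycle v with v(σ) = 1; in fact, taking n = u(σ)^{1/2} one has n⁻¹·u(σ)·(σ•n) = 1. -/

import Mathlib

/-- A 1-cocycle of `G` in a (possibly noncommutative) group `N` on which `G`
acts on the left by group automorphisms: `u (g₁ * g₂) = u g₁ * g₁ • u g₂`. -/
def IsCocycle {G N : Type*} [Group G] [Group N] [MulDistribMulAction G N]
    (u : G → N) : Prop :=
  ∀ g₁ g₂ : G, u (g₁ * g₂) = u g₁ * g₁ • u g₂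

/-- Two maps `u v : G → N` are cohomologous if there is `n : N` with
`v g = n⁻¹ * u g * g • n` for all `g`. -/
def Cohomologous {G N : Type*} [Group G] [Group N] [MulDistribMulAction G N]
    (u v : G → N) : Prop :=
  ∃ n : N, ∀ g : G, v g = n⁻¹ * u g * g • n

/-- The group `SL(2,ℤ)`. -/
abbrev SL2Z := Matrix.SpecialLinearGroup (Fin 2) ℤ

/-- The group `PSL(2,ℤ)`, the quotient of `SL(2,ℤ)` by its center `{±1}`. -/
abbrev PSL2Z := SL2Z ⧸ Subgroup.center SL2Z

/-- The image `σ` of the matrix `((0,-1),(1,0))` in `PSL(2,ℤ)`. -/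
def pslSigma : PSL2Z :=
  QuotientGroup.mk ⟨!![0, -1; 1, 0], by norm_num [Matrix.det_fin_two_of]⟩

/-- The image `τ` of the matrix `((0,-1),(1,-1))` in `PSL(2,ℤ)`. -/
def pslTau : PSL2Z :=
  QuotientGroup.mk ⟨!![0, -1; 1, -1], by norm_num [Matrix.det_fin_two_of]⟩

/-!
Since `σ² = 1`, the cocycle identity gives `σ • u(σ) = u(σ)⁻¹`. If `n² = u(σ)`, then
`(σ • n)² = σ • u(σ) = u(σ)⁻¹ = (n⁻¹)²`, so `σ • n = n⁻¹` by injectivity of squaring, and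
`n⁻¹ · u(σ) · (σ • n) = n⁻¹ · n² · n⁻¹ = 1`.
-/

namespace IsCocycle

variable {G N : Type*} [Group G] [Group N] [MulDistribMulAction G N] {u : G → N}

theorem map_one (hu : IsCocycle u) : u 1 = 1 := by
  have h := hu 1 1
  rwa [mul_one, one_smul, left_eq_mul] at h

theorem smul_self_eq_inv {s : G} (hu : IsCocycle u) (hs : s * s = 1) : s • u s = (u s)⁻¹ := by
  have h := hu s s
  rw [hs, hu.map_one] at h
  exact (inv_eq_of_mul_eq_one_right h.symm).symm

theorem of_cohomologous {v : G → N} (hu : IsCocycle u) (huv : Cohomologous u v) :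
    IsCocycle v := by
  obtain ⟨n, hv⟩ := huv
  intro g₁ g₂
  simp only [hv, hu g₁ g₂, smul_mul', smul_inv', mul_smul]
  group

theorem inv_mul_mul_smul_sqrt_eq_one {s : G} {n : N} (hu : IsCocycle u)
    (hsq : Function.Injective fun m : N => m * m) (hs : s * s = 1) (hn : n * n = u s) :
    n⁻¹ * u s * s • n = 1 := by
  have hsn : s • n = n⁻¹ := hsq <| by
    change s • n * s • n = n⁻¹ * n⁻¹
    rw [← smul_mul', hn, hu.smul_self_eq_inv hs, ← hn, mul_inv_rev]
  rw [hsn, ← hn]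
  group

end IsCocycle

theorem pslSigma_mul_self : pslSigma * pslSigma = 1 := by
  -- the matrix squares to `-1`, which is central
  obtain ⟨S, hS, hσ⟩ : ∃ S : SL2Z, (S : Matrix (Fin 2) (Fin 2) ℤ) = !![0, -1; 1, 0] ∧
      pslSigma = QuotientGroup.mk S := ⟨_, rfl, rfl⟩
  rw [hσ, ← QuotientGroup.mk_mul, QuotientGroup.eq_one_iff, Subgroup.mem_center_iff]
  intro g
  ext i j
  fin_cases i <;> fin_cases j <;>
    simp [Matrix.SpecialLinearGroup.coe_mul, Matrix.mul_apply, Fin.sum_univ_two, hS]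

theorem cohomologous_to_sigma_one {N : Type*} [Group N]
    [MulDistribMulAction PSL2Z N]
    (hsq : Function.Bijective fun n : N => n * n)
    (u : PSL2Z → N) (hu : IsCocycle u) :
    (∀ n : N, n * n = u pslSigma → n⁻¹ * u pslSigma * pslSigma • n = 1) ∧
    ∃ v : PSL2Z → N, IsCocycle v ∧ Cohomologous u v ∧ v pslSigma = 1 := by
  have twist_sqrt_eq_one (n : N) (hn : n * n = u pslSigma) : n⁻¹ * u pslSigma * pslSigma • n = 1 :=
    hu.inv_mul_mul_smul_sqrt_eq_one hsq.injective pslSigma_mul_self hn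
  obtain ⟨n, hn⟩ := hsq.surjective (u pslSigma)
  have huv : Cohomologous u fun g => n⁻¹ * u g * g • n := ⟨n, fun _ => rfl⟩
  exact ⟨twist_sqrt_eq_one, _, hu.of_cohomologous huv, huv, twist_sqrt_eq_one n hn⟩
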